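/- Let Φ* : C^∞(ℝⁿ) → ℝ[θ₁,θ₂] be an ℝ-algebra homomorphism with expansion Φ*(f) = f(φ) + θ₁ψ₁(f) + θ₂ψ₂(f) + θ₁θ₂E(f), where ψ₁, ψ₂ are point derivations at φ. Then ψ₁ and ψ₂ are linearly dependent as elements of the tangent space at φ (i.e., there exist scalars (a,b) ≠ (0,0) with aψ₁ + bψ₂ = 0). -/

import Mathlib

open scoped Manifold
noncomputable section
abbrev Cinf (n : ℕ) := C^(⊤:ℕ∞)⟮𝓘(ℝ, (Fin n → ℝ)), (Fin n → ℝ); 𝓘(ℝ, ℝ), ℝ⟯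
abbrev Gr := ExteriorAlgebra ℝ (Fin 2 → ℝ)
def θ₁ : Gr := ExteriorAlgebra.ι ℝ ![1, 0]
def θ₂ : Gr := ExteriorAlgebra.ι ℝ ![0, 1]

def myFam : ∀ i : ℕ, (Fin 2 → ℝ) [⋀^Fin i]→ₗ[ℝ] ℝ
  | 2 => Matrix.detRowAlternating
  | _ => 0

def myL : Gr →ₗ[ℝ] ℝ := ExteriorAlgebra.liftAlternating myFam

lemma myL_alg (r : ℝ) : myL (algebraMap ℝ Gr r) = 0 := by
  simp [myL, ExteriorAlgebra.liftAlternating_algebraMap, myFam]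

lemma myL_ι (m : Fin 2 → ℝ) : myL (ExteriorAlgebra.ι ℝ m) = 0 := by
  simp [myL, ExteriorAlgebra.liftAlternating_ι, myFam]

lemma myL_ιι (m m' : Fin 2 → ℝ) :
    myL (ExteriorAlgebra.ι ℝ m * ExteriorAlgebra.ι ℝ m') = Matrix.det ![m, m'] := by
  rw [myL, ExteriorAlgebra.liftAlternating_ι_mul, ExteriorAlgebra.liftAlternating_ι]
  show (myFam 2).curryLeft m ![m'] = _
  simp [myFam, AlternatingMap.curryLeft_apply_apply]
  rfl

lemma myL_T : myL (θ₁ * θ₂) = 1 := by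
  rw [θ₁, θ₂, myL_ιι]
  exact (Matrix.det_fin_two _).trans (by simp)

lemma θ₁_sq : θ₁ * θ₁ = 0 := ExteriorAlgebra.ι_sq_zero _
lemma θ₂_sq : θ₂ * θ₂ = 0 := ExteriorAlgebra.ι_sq_zero _
lemma θ₂₁ : θ₂ * θ₁ = -(θ₁ * θ₂) := by
  have := ExteriorAlgebra.ι_add_mul_swap (R := ℝ) (M := Fin 2 → ℝ) ![1,0] ![0,1]
  rw [θ₁, θ₂]; exact eq_neg_of_add_eq_zero_right this
lemma θ₁T : θ₁ * (θ₁ * θ₂) = 0 := by rw [← mul_assoc, θ₁_sq, zero_mul]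
lemma θ₂T : θ₂ * (θ₁ * θ₂) = 0 := by
  rw [← mul_assoc, θ₂₁, neg_mul, mul_assoc, θ₂_sq, mul_zero, neg_zero]
lemma Tθ₁ : (θ₁ * θ₂) * θ₁ = 0 := by
  rw [mul_assoc, θ₂₁, mul_neg, ← mul_assoc, θ₁_sq, zero_mul, neg_zero]
lemma Tθ₂ : (θ₁ * θ₂) * θ₂ = 0 := by rw [mul_assoc, θ₂_sq, mul_zero]
lemma TT : (θ₁ * θ₂) * (θ₁ * θ₂) = 0 := by rw [← mul_assoc, Tθ₁, zero_mul]

/-- The two odd components of an algebra hom into the Grassmann algebra are linearly dependent. -/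
theorem stmt3 (n : ℕ) (Φ : Cinf n →ₐ[ℝ] Gr) (φ : Fin n → ℝ) (ψ1 ψ2 E : Cinf n → ℝ)
    (hΦ : ∀ f, Φ f = algebraMap ℝ Gr (f φ) + ψ1 f • θ₁ + ψ2 f • θ₂ + E f • (θ₁ * θ₂))
    (hψ1 : ∀ f g, ψ1 (f * g) = f φ * ψ1 g + g φ * ψ1 f)
    (hψ2 : ∀ f g, ψ2 (f * g) = f φ * ψ2 g + g φ * ψ2 f) :
    ∃ a b : ℝ, ¬(a = 0 ∧ b = 0) ∧ ∀ f, a * ψ1 f + b * ψ2 f = 0 := by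
  have hLmul : ∀ f g : Cinf n, myL (Φ f * Φ g) =
      f φ * E g + g φ * E f + (ψ1 f * ψ2 g - ψ2 f * ψ1 g) := by
    intro f g
    rw [hΦ f, hΦ g]
    simp only [mul_add, add_mul, map_add, Algebra.smul_mul_assoc, Algebra.mul_smul_comm,
      map_smul, smul_smul, ← Algebra.algebraMap_eq_smul_one, ← map_mul,
      θ₁_sq, θ₂_sq, θ₂₁, θ₁T, θ₂T, Tθ₁, Tθ₂, TT,
      myL_alg, myL_T, mul_neg, map_neg, smul_zero, map_zero,
      Algebra.commutes]
    have h1 : myL θ₁ = 0 := by rw [θ₁]; exact myL_ι _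
    have h2 : myL θ₂ = 0 := by rw [θ₂]; exact myL_ι _
    simp only [← Algebra.commutes, ← Algebra.smul_def, map_smul, h1, h2, myL_T,
      Algebra.algebraMap_self_apply, smul_zero, mul_zero, zero_mul, smul_eq_mul, mul_one,
      add_zero, zero_add]
    ring
  have key : ∀ f g : Cinf n, ψ1 f * ψ2 g = ψ2 f * ψ1 g := by
    intro f g
    have h : Φ f * Φ g = Φ g * Φ f := by rw [← map_mul, ← map_mul, mul_comm]
    have := congrArg myL h
    rw [hLmul, hLmul] at this
    linarith
  by_cases hz : ∀ f, ψ1 f = 0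
  · exact ⟨1, 0, by simp, fun f => by simp [hz f]⟩
  · push_neg at hz
    obtain ⟨f₀, hf₀⟩ := hz
    refine ⟨ψ2 f₀, -(ψ1 f₀), by simp [hf₀], fun f => ?_⟩
    have := key f₀ f
    linarith [key f f₀]
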